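/- For each i, j ∈ {1,2} let μᵢⱼ be a probability distribution on {−1,+1}². The following are equivalent: (a) there exist a probability space (Ω, 𝔽, P) and measurable functions f₁, f₂, g₁, g₂ : Ω → {−1,+1} such that for all i, j ∈ {1,2}, the pair (fᵢ, gⱼ) has joint distribution μᵢⱼ under P; (b) (Joint Distribution Criterion) there exists a probability distribution on ({−1,+1})⁴, viewed as the joint distribution of (H¹₁, H¹₂, H²₁, H²₂), such that (H¹ᵢ, H²ⱼ) has distribution μᵢⱼ for all i, j ∈ {1,2}. In particular, when (a) holds, the source of randomness can always be taken to be a single random variable with at most 2⁴ values. -/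
import Mathlib


open MeasureTheory

/-- A selective-influences representation of the family of joint distributions `μ i j` on
`{−1,+1}²` (encoded as `Bool × Bool`, `true` standing for `+1`): a probability space `Ω`
with measurable functions `f i, g j : Ω → Bool` such that `(f i, g j)` has distribution
`μ i j` for all `i, j`. -/
def SelRep (μ : Fin 2 → Fin 2 → Bool × Bool → ℝ) : Prop :=
  ∃ (Ω : Type) (_ : MeasurableSpace Ω) (P : Measure Ω) (_ : IsProbabilityMeasure P)
    (f g : Fin 2 → Ω → Bool),
      (∀ i, Measurable (f i)) ∧ (∀ j, Measurable (g j)) ∧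
      ∀ i j : Fin 2, ∀ a b : Bool,
        (P {ω | f i ω = a ∧ g j ω = b}).toReal = μ i j (a, b)

/-- A selective-influences representation whose underlying probability space is finite with
at most `2⁴` points. -/
def SelRepFin (μ : Fin 2 → Fin 2 → Bool × Bool → ℝ) : Prop :=
  ∃ (Ω : Type) (_ : Fintype Ω) (_ : MeasurableSpace Ω) (P : Measure Ω)
    (_ : IsProbabilityMeasure P) (f g : Fin 2 → Ω → Bool),
      Fintype.card Ω ≤ 2 ^ 4 ∧
      (∀ i, Measurable (f i)) ∧ (∀ j, Measurable (g j)) ∧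
      ∀ i j : Fin 2, ∀ a b : Bool,
        (P {ω | f i ω = a ∧ g j ω = b}).toReal = μ i j (a, b)

/-- The Joint Distribution Criterion: there is a single probability distribution on
`({−1,+1})⁴` (encoded as `Fin 2 → Fin 2 → Bool`, `h k i` the value of `Hᵏᵢ`) whose
pairs `(H¹ᵢ, H²ⱼ)` have the distributions `μ i j`. -/
def JDC (μ : Fin 2 → Fin 2 → Bool × Bool → ℝ) : Prop :=
  ∃ ν : (Fin 2 → Fin 2 → Bool) → ℝ,
    (∀ h, 0 ≤ ν h) ∧
    (∑ h : Fin 2 → Fin 2 → Bool, ν h = 1) ∧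
    ∀ i j : Fin 2, ∀ a b : Bool,
      ∑ h ∈ Finset.univ.filter
          (fun h : Fin 2 → Fin 2 → Bool => h 0 i = a ∧ h 1 j = b), ν h = μ i j (a, b)

/-- a selective-influences representation exists if and only if the Joint
Distribution Criterion holds; moreover, when it exists, the source of randomness can be
taken to be a single random variable with at most `2⁴` values. -/

lemma jdc_to_fin (μ : Fin 2 → Fin 2 → Bool × Bool → ℝ) (h : (∃ ν : (Fin 2 → Fin 2 → Bool) → ℝ,
    (∀ h, 0 ≤ ν h) ∧
    (∑ h : Fin 2 → Fin 2 → Bool, ν h = 1) ∧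
    ∀ i j : Fin 2, ∀ a b : Bool,
      ∑ h ∈ Finset.univ.filter
          (fun h : Fin 2 → Fin 2 → Bool => h 0 i = a ∧ h 1 j = b), ν h = μ i j (a, b))) :
    ∃ (Ω : Type) (_ : Fintype Ω) (_ : MeasurableSpace Ω) (P : Measure Ω)
    (_ : IsProbabilityMeasure P) (f g : Fin 2 → Ω → Bool),
      Fintype.card Ω ≤ 2 ^ 4 ∧
      (∀ i, Measurable (f i)) ∧ (∀ j, Measurable (g j)) ∧
      ∀ i j : Fin 2, ∀ a b : Bool,
        (P {ω | f i ω = a ∧ g j ω = b}).toReal = μ i j (a, b) := by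
  obtain ⟨ν, hν0, hν1, hνμ⟩ := h
  refine ⟨Fin 2 → Fin 2 → Bool, inferInstance, inferInstance,
    ∑ h : Fin 2 → Fin 2 → Bool, ENNReal.ofReal (ν h) • Measure.dirac h, ?_,
    fun i ω => ω 0 i, fun j ω => ω 1 j, ?_, ?_, ?_, ?_⟩
  · constructor
    have : ∀ s : Set (Fin 2 → Fin 2 → Bool),
        (∑ h : Fin 2 → Fin 2 → Bool, ENNReal.ofReal (ν h) • Measure.dirac h) s
          = ∑ h : Fin 2 → Fin 2 → Bool, ENNReal.ofReal (ν h) * s.indicator 1 h := by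
      intro s
      rw [Measure.coe_finset_sum]
      simp only [Finset.sum_apply, Measure.smul_apply, smul_eq_mul]
      congr 1; ext h
      rw [Measure.dirac_apply' _ (MeasurableSet.of_discrete)]
    rw [this]
    simp only [Set.indicator_univ, Pi.one_apply, mul_one]
    rw [← ENNReal.ofReal_sum_of_nonneg (fun h _ => hν0 h), hν1, ENNReal.ofReal_one]
  · decide
  · intro i; exact measurable_of_countable _
  · intro j; exact measurable_of_countable _
  · intro i j a b
    have hthis : ∀ s : Set (Fin 2 → Fin 2 → Bool),
        (∑ h : Fin 2 → Fin 2 → Bool, ENNReal.ofReal (ν h) • Measure.dirac h) s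
          = ∑ h : Fin 2 → Fin 2 → Bool, ENNReal.ofReal (ν h) * s.indicator 1 h := by
      intro s
      rw [Measure.coe_finset_sum]
      simp only [Finset.sum_apply, Measure.smul_apply, smul_eq_mul]
      congr 1; ext h
      rw [Measure.dirac_apply' _ (MeasurableSet.of_discrete)]
    rw [hthis]
    rw [ENNReal.toReal_sum (by
      intro h _
      exact ENNReal.mul_ne_top ENNReal.ofReal_ne_top (by
        by_cases hh : h ∈ {ω : Fin 2 → Fin 2 → Bool | ω 0 i = a ∧ ω 1 j = b} <;>
          simp [Set.indicator, hh]))]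
    rw [← hνμ i j a b, Finset.sum_filter]
    apply Finset.sum_congr rfl
    intro h _
    by_cases hh : h 0 i = a ∧ h 1 j = b <;>
      simp [Set.indicator, hh, ENNReal.toReal_ofReal (hν0 h)]



lemma rep_to_jdc (μ : Fin 2 → Fin 2 → Bool × Bool → ℝ)
    (h : ∃ (Ω : Type) (_ : MeasurableSpace Ω) (P : Measure Ω) (_ : IsProbabilityMeasure P)
    (f g : Fin 2 → Ω → Bool),
      (∀ i, Measurable (f i)) ∧ (∀ j, Measurable (g j)) ∧
      ∀ i j : Fin 2, ∀ a b : Bool,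
        (P {ω | f i ω = a ∧ g j ω = b}).toReal = μ i j (a, b)) :
    ∃ ν : (Fin 2 → Fin 2 → Bool) → ℝ,
    (∀ h, 0 ≤ ν h) ∧
    (∑ h : Fin 2 → Fin 2 → Bool, ν h = 1) ∧
    ∀ i j : Fin 2, ∀ a b : Bool,
      ∑ h ∈ Finset.univ.filter
          (fun h : Fin 2 → Fin 2 → Bool => h 0 i = a ∧ h 1 j = b), ν h = μ i j (a, b) := by
  obtain ⟨Ω, m, P, hP, f, g, hf, hg, hμ⟩ := h
  set S : (Fin 2 → Fin 2 → Bool) → Set Ω :=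
    fun h => (⋂ i, f i ⁻¹' {h 0 i}) ∩ (⋂ i, g i ⁻¹' {h 1 i}) with hS
  have hSm : ∀ h, MeasurableSet (S h) := fun h =>
    (MeasurableSet.iInter fun i => hf i (measurableSet_singleton _)).inter
      (MeasurableSet.iInter fun i => hg i (measurableSet_singleton _))
  set cl : Ω → (Fin 2 → Fin 2 → Bool) :=
    fun ω k i => if k = 0 then f i ω else g i ω with hcl
  have hmem : ∀ (ω : Ω) (h : Fin 2 → Fin 2 → Bool), ω ∈ S h ↔ cl ω = h := by
    intro ω h
    constructor
    · rintro ⟨h1, h2⟩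
      simp only [Set.mem_iInter, Set.mem_preimage, Set.mem_singleton_iff] at h1 h2
      funext k i
      fin_cases k
      · simpa [hcl] using h1 i
      · simpa [hcl, show (1 : Fin 2) ≠ 0 by decide] using h2 i
    · rintro rfl
      constructor
      · simp [hcl]
      · simp [hcl, show (1 : Fin 2) ≠ 0 by decide]
  have hdisj : ∀ (s : Finset (Fin 2 → Fin 2 → Bool)),
      Set.PairwiseDisjoint (s : Set (Fin 2 → Fin 2 → Bool)) S := by
    intro s h _ h' _ hne
    refine Set.disjoint_left.2 fun ω hω hω' => hne ?_
    rw [hmem] at hω hω'; rw [← hω, hω']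
  refine ⟨fun h => (P (S h)).toReal, fun h => ENNReal.toReal_nonneg, ?_, ?_⟩
  · rw [← ENNReal.toReal_sum (fun h _ => measure_ne_top P _),
      ← measure_biUnion_finset (hdisj _) (fun h _ => hSm h)]
    have : ⋃ h ∈ (Finset.univ : Finset (Fin 2 → Fin 2 → Bool)), S h = Set.univ := by
      apply Set.eq_univ_of_forall
      intro ω
      simp only [Set.mem_iUnion]
      exact ⟨cl ω, Finset.mem_univ _, (hmem ω _).2 rfl⟩
    rw [this, measure_univ, ENNReal.toReal_one]
  · intro i j a b
    rw [← ENNReal.toReal_sum (fun h _ => measure_ne_top P _),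
      ← measure_biUnion_finset (hdisj _) (fun h _ => hSm h)]
    have hset : ⋃ h ∈ Finset.univ.filter
        (fun h : Fin 2 → Fin 2 → Bool => h 0 i = a ∧ h 1 j = b), S h
        = {ω | f i ω = a ∧ g j ω = b} := by
      ext ω
      simp only [Set.mem_iUnion, Finset.mem_filter, Finset.mem_univ, true_and, Set.mem_setOf_eq]
      constructor
      · rintro ⟨h, ⟨ha, hb⟩, hω⟩
        rw [hmem] at hω
        subst hω
        refine ⟨by simpa [hcl] using ha, by simpa [hcl, show (1:Fin 2) ≠ 0 by decide] using hb⟩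
      · rintro ⟨ha, hb⟩
        refine ⟨cl ω, ⟨?_, ?_⟩, (hmem ω _).2 rfl⟩
        · simpa [hcl] using ha
        · simpa [hcl, show (1:Fin 2) ≠ 0 by decide] using hb
    rw [hset, hμ]


theorem selective_influences_iff_jdc
    (μ : Fin 2 → Fin 2 → Bool × Bool → ℝ)
    (hnn : ∀ i j ab, 0 ≤ μ i j ab)
    (hsum : ∀ i j, ∑ ab : Bool × Bool, μ i j ab = 1) :
    (SelRep μ ↔ JDC μ) ∧ (SelRep μ → SelRepFin μ) := by
  have h1 : SelRep μ → JDC μ := fun h => rep_to_jdc μ h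
  have h2 : JDC μ → SelRepFin μ := fun h => jdc_to_fin μ h
  have h3 : SelRepFin μ → SelRep μ := by
    rintro ⟨Ω, _, m, P, hP, f, g, _, hf, hg, hμ⟩
    exact ⟨Ω, m, P, hP, f, g, hf, hg, hμ⟩
  exact ⟨⟨h1, fun h => h3 (h2 h)⟩, fun h => h2 (h1 h)⟩
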